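/- Let G be a simple graph with no ds-completable card, let i be a vertex set such that V∖i is neighbourly, and let p = (V∖i) ∩ D where D is the set of dull vertices. Then the number of edge-endpoints (stubs) within p satisfies ε(p,p) ≤ n_p(n_p − 2) + τ(i,p), where ε(p,p) is twice the number of edges inside p, n_p = |p|, and τ(i,p) is any upper bound on the number of edges between i and p. -/

import Mathlib

open SimpleGraph Finset
open scoped Classical

variable {V : Type*}

/-- The degree of a vertex `u` in a simple graph `G`. -/
noncomputable def deg (G : SimpleGraph V) (u : V) : ℕ := (G.neighborSet u).ncard

/-- The degree of `u` in the card `G − v` (the vertex-deleted subgraph at `v`). -/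
noncomputable def cardDeg (G : SimpleGraph V) (v u : V) : ℕ := (G.neighborSet u \ {v}).ncard

/-- The card `G − v` is ds-completable: for each degree `d`, the vertices of degree `d`
in `G − v` are either all neighbours of `v` in `G` or all non-neighbours of `v` in `G`. -/
def DsCompletable (G : SimpleGraph V) (v : V) : Prop :=
  ∀ d : ℕ, (∀ u, u ≠ v → cardDeg G v u = d → G.Adj v u) ∨
           (∀ u, u ≠ v → cardDeg G v u = d → ¬ G.Adj v u)

/-- A vertex is bad if the graph contains a vertex of degree one less. -/
def Bad (G : SimpleGraph V) (v : V) : Prop := ∃ w, deg G w + 1 = deg G v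

/-- A vertex is dull if the graph contains a vertex of degree one more. -/
def Dull (G : SimpleGraph V) (v : V) : Prop := ∃ w, deg G w = deg G v + 1

/-- ε(s,t): the number of stubs on `s` used by edges from `s` to `t`
(for disjoint `s`, `t` this is the number of edges between them; for `s = t`
it is twice the number of edges inside `s`). -/
noncomputable def stubs (G : SimpleGraph V) (s t : Finset V) : ℕ :=
  ((s ×ˢ t).filter fun p => G.Adj p.1 p.2).card

/-- A vertex set is neighbourly if no vertex outside the set has a degree one less
than that of a vertex in the set. -/
def Neighbourly (G : SimpleGraph V) (K : Finset V) : Prop :=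
  ∀ u ∉ K, ∀ w ∈ K, deg G u + 1 ≠ deg G w

/-- A vertex set is `d`-neighbourly if it contains a vertex `v` of degree `d` such that
no vertex outside the set has a degree one less than that of any member other than `v`. -/
def DNeighbourly (G : SimpleGraph V) (d : ℕ) (K : Finset V) : Prop :=
  ∃ v ∈ K, deg G v = d ∧ ∀ u ∉ K, ∀ w ∈ K, w ≠ v → deg G u + 1 ≠ deg G w

/-! A vertex `v` of `p` adjacent to every other vertex of `p` and to no vertex of `i` would make
the card `G − v` ds-completable: two vertices of equal degree in `G − v`, one adjacent to `v` and
one not, have degrees `d + 1` and `d` in `G`; the first lies outside `i`, so by neighbourliness so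
does the second, which is then dull, i.e. in `p`, hence adjacent to `v`. So each such vertex of
`p` takes a stub of `τ(i,p)`, and every other vertex of `p` has at most `n_p − 2` neighbours in `p`. -/

section Degrees

variable {G : SimpleGraph V} {u v : V}

theorem cardDeg_of_not_adj (hadj : ¬ G.Adj v u) : cardDeg G v u = deg G u := by
  rw [cardDeg, deg, Set.sdiff_singleton_eq_self fun h => hadj ((G.mem_neighborSet u v).mp h).symm]

variable [Finite V]

theorem cardDeg_add_one_of_adj (hadj : G.Adj v u) : cardDeg G v u + 1 = deg G u :=
  Set.ncard_sdiff_singleton_add_one (G.mem_neighborSet u v |>.mpr hadj.symm) (Set.toFinite _)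

theorem dsCompletable_of_neighbourly {K : Finset V} (hK : Neighbourly G K)
    (hnbr : ∀ u, G.Adj v u → u ∈ K) (hdull : ∀ w ∈ K, w ≠ v → Dull G w → G.Adj v w) :
    DsCompletable G v := by
  intro d
  by_contra! hmixed
  obtain ⟨⟨u', hu'v, hu'd, hu'⟩, ⟨u, -, hud, hu⟩⟩ := hmixed
  have hdeg_u : deg G u = d + 1 := by rw [← cardDeg_add_one_of_adj hu, hud]
  have hdeg_u' : deg G u' = d := by rw [← cardDeg_of_not_adj hu', hu'd]
  have hu'K : u' ∈ K := by
    by_contra hu'K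
    exact hK u' hu'K u (hnbr u hu) (by omega)
  exact hu' (hdull u' hu'K hu'v ⟨u, by omega⟩)

end Degrees

section Stubs

variable (G : SimpleGraph V)

theorem stubs_eq_sum_card_filter_adj (s t : Finset V) :
    stubs G s t = ∑ v ∈ s, #{w ∈ t | G.Adj v w} := by
  rw [stubs, card_filter, sum_product]
  exact sum_congr rfl fun v _ => (card_filter _ _).symm

theorem card_filter_exists_adj_le_stubs (s t : Finset V) :
    #{v ∈ t | ∃ u ∈ s, G.Adj u v} ≤ stubs G s t := by
  calc #{v ∈ t | ∃ u ∈ s, G.Adj u v}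
      ≤ #(((s ×ˢ t).filter fun q => G.Adj q.1 q.2).image Prod.snd) := by
        refine card_le_card fun v hv => ?_
        obtain ⟨hvt, u, hus, huv⟩ := mem_filter.mp hv
        exact mem_image.mpr ⟨(u, v), mem_filter.mpr ⟨mem_product.mpr ⟨hus, hvt⟩, huv⟩, rfl⟩
    _ ≤ stubs G s t := card_image_le

theorem card_filter_adj_le (s : Finset V) (v : V) (hv : v ∈ s) :
    #{w ∈ s | G.Adj v w} ≤ #s - 1 := by
  rw [← card_erase_of_mem hv]
  exact card_le_card fun w hw => by
    obtain ⟨hws, hvw⟩ := mem_filter.mp hw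
    exact mem_erase.mpr ⟨hvw.ne', hws⟩

theorem card_filter_adj_le_of_not_adj (s : Finset V) {v w : V} (hv : v ∈ s) (hw : w ∈ s)
    (hwv : w ≠ v) (hvw : ¬ G.Adj v w) : #{x ∈ s | G.Adj v x} ≤ #s - 2 := by
  calc #{x ∈ s | G.Adj v x} ≤ #((s.erase v).erase w) := card_le_card fun x hx => by
        obtain ⟨hxs, hvx⟩ := mem_filter.mp hx
        exact mem_erase.mpr ⟨fun hxw => hvw (hxw ▸ hvx), mem_erase.mpr ⟨hvx.ne', hxs⟩⟩
    _ = #s - 2 := by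
      rw [card_erase_of_mem (mem_erase.mpr ⟨hwv, hw⟩), card_erase_of_mem hv, Nat.sub_sub]

theorem stubs_self_le_add_card (s F : Finset V)
    (hF : ∀ v ∈ s, v ∉ F → ∃ w ∈ s, w ≠ v ∧ ¬ G.Adj v w) :
    stubs G s s ≤ #s * (#s - 2) + #F := by
  have hbound : ∀ v ∈ s, #{w ∈ s | G.Adj v w} ≤ (#s - 2) + if v ∈ F then 1 else 0 := by
    intro v hv
    by_cases hvF : v ∈ F
    · have := card_filter_adj_le G s v hv
      rw [if_pos hvF]
      omega
    · obtain ⟨w, hw, hwv, hvw⟩ := hF v hv hvF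
      rw [if_neg hvF, add_zero]
      exact card_filter_adj_le_of_not_adj G s hv hw hwv hvw
  calc stubs G s s = ∑ v ∈ s, #{w ∈ s | G.Adj v w} := stubs_eq_sum_card_filter_adj G s s
    _ ≤ ∑ v ∈ s, ((#s - 2) + if v ∈ F then 1 else 0) := sum_le_sum hbound
    _ = #s * (#s - 2) + #{v ∈ s | v ∈ F} := by
      rw [sum_add_distrib, sum_const, smul_eq_mul, sum_boole, Nat.cast_id]
    _ ≤ #s * (#s - 2) + #F :=
      Nat.add_le_add_left (card_le_card fun v hv => (mem_filter.mp hv).2) _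

end Stubs

/-- In a graph with no ds-completable card, if `V∖i` is neighbourly and `p` is the set of
dull vertices in `V∖i`, then `ε(p,p) ≤ n_p(n_p − 2) + τ(i,p)`. -/
theorem stmt13 [Fintype V] (G : SimpleGraph V)
    (h : ∀ v : V, ¬ DsCompletable G v) (i : Finset V)
    (hnb : Neighbourly G (univ \ i))
    (p : Finset V) (hp : p = (univ \ i).filter fun v => Dull G v)
    (τ : ℕ) (hτ : stubs G i p ≤ τ) :
    stubs G p p ≤ p.card * (p.card - 2) + τ := by
  have hnonfull : ∀ v ∈ p, v ∉ {x ∈ p | ∃ u ∈ i, G.Adj u x} →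
      ∃ w ∈ p, w ≠ v ∧ ¬ G.Adj v w := by
    intro v hv hno_i
    by_contra! hfull
    refine h v (dsCompletable_of_neighbourly hnb (fun u hvu => ?_) fun w hw hwv hdull => ?_)
    · simpa using fun hui => hno_i (mem_filter.mpr ⟨hv, u, hui, hvu.symm⟩)
    · exact hfull w (hp ▸ mem_filter.mpr ⟨hw, hdull⟩) hwv
  calc stubs G p p ≤ #p * (#p - 2) + #{v ∈ p | ∃ u ∈ i, G.Adj u v} :=
        stubs_self_le_add_card G p _ hnonfull
    _ ≤ #p * (#p - 2) + τ :=
        Nat.add_le_add_left ((card_filter_exists_adj_le_stubs G i p).trans hτ) _
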